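/- Let a, b, c : Ω → ℝ be integrable functions on a measure space, with a ≥ δ > 0 on a measurable set B ⊆ U, a ≥ 0 on U, and a ≥ m on Ω \ U for some m ∈ ℝ. If (w_i) is a sequence of nonnegative integrable functions with ∫_B w_i dμ → ∞ and ∫_{Ω∖U} w_i dμ → 0, then ∫_Ω a w_i dμ → ∞. -/
import Mathlib


open MeasureTheory Filter

theorem integral_tendsto_atTop_of_localized
    (Ω : Type*) [MeasurableSpace Ω] (μ : Measure Ω)
    (B U : Set Ω) (hB : MeasurableSet B) (hU : MeasurableSet U) (hBU : B ⊆ U)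
    (a : Ω → ℝ) (ha : Integrable a μ)
    (δ : ℝ) (hδ : 0 < δ)
    (haB : ∀ x ∈ B, δ ≤ a x)
    (haU : ∀ x ∈ U, 0 ≤ a x)
    (m : ℝ) (ham : ∀ x ∉ U, m ≤ a x)
    (w : ℕ → Ω → ℝ)
    (hw0 : ∀ i x, 0 ≤ w i x)
    (hwint : ∀ i, Integrable (w i) μ)
    (hawint : ∀ i, Integrable (fun x => a x * w i x) μ)
    (hwB : Tendsto (fun i => ∫ x in B, w i x ∂μ) atTop atTop)
    (hwU : Tendsto (fun i => ∫ x in Uᶜ, w i x ∂μ) atTop (nhds 0)) :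
    Tendsto (fun i => ∫ x, a x * w i x ∂μ) atTop atTop := by
  have hlim : Tendsto (fun i => δ * ∫ x in B, w i x ∂μ + m * ∫ x in Uᶜ, w i x ∂μ)
      atTop atTop := by
    have h1 : Tendsto (fun i => δ * ∫ x in B, w i x ∂μ) atTop atTop :=
      hwB.const_mul_atTop hδ
    have h2 : Tendsto (fun i => m * ∫ x in Uᶜ, w i x ∂μ) atTop (nhds (m * 0)) :=
      hwU.const_mul m
    exact h1.atTop_add h2
  refine tendsto_atTop_mono (fun i => ?_) hlim
  have hsplit : ∫ x, a x * w i x ∂μ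
      = (∫ x in U, a x * w i x ∂μ) + ∫ x in Uᶜ, a x * w i x ∂μ :=
    (integral_add_compl hU (hawint i)).symm
  have h2 : δ * ∫ x in B, w i x ∂μ ≤ ∫ x in B, a x * w i x ∂μ := by
    rw [← integral_const_mul]
    refine setIntegral_mono_on ((hwint i).const_mul δ).integrableOn
      (hawint i).integrableOn hB (fun x hx => ?_)
    exact mul_le_mul_of_nonneg_right (haB x hx) (hw0 i x)
  have h3 : ∫ x in B, a x * w i x ∂μ ≤ ∫ x in U, a x * w i x ∂μ := by
    refine setIntegral_mono_set (hawint i).integrableOn ?_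
      (HasSubset.Subset.eventuallyLE hBU)
    filter_upwards [ae_restrict_mem hU] with x hx
    exact mul_nonneg (haU x hx) (hw0 i x)
  have h4 : m * ∫ x in Uᶜ, w i x ∂μ ≤ ∫ x in Uᶜ, a x * w i x ∂μ := by
    rw [← integral_const_mul]
    refine setIntegral_mono_on ((hwint i).const_mul m).integrableOn
      (hawint i).integrableOn hU.compl (fun x hx => ?_)
    exact mul_le_mul_of_nonneg_right (ham x hx) (hw0 i x)
  rw [hsplit]
  linarith
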